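/- Let R be a commutative ring and let M be a w-flat R-module, i.e., M_m is a flat R_m-module for every m ∈ w-Max(R). Then the following are equivalent: (1) A ⊗_R M is not GV-torsion for every nonzero w-module A; (2) B ⊗_R M is not GV-torsion for every nonzero GV-torsion-free R-module B; (3) M/IM is not GV-torsion for every proper w-ideal I of R; (4) M/mM is not GV-torsion for every m ∈ w-Max(R); (5) M_m/mM_m ≠ 0 for every m ∈ w-Max(R); (6) M_m is a faithfully flat R_m-module for every m ∈ w-Max(R). (A module M satisfying these conditions is called w-faithfully flat.) -/

import Mathlib

universe u v

section WDefs

variable (R : Type u) [CommRing R]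

/-- The canonical `R`-linear map `R → Hom_R(J, R)`, `r ↦ (j ↦ r * j)`. -/
def gvCanonicalMap (J : Ideal R) : R →ₗ[R] (J →ₗ[R] R) where
  toFun r := r • (J.subtype)
  map_add' x y := add_smul x y _
  map_smul' r x := by simp [mul_smul]

/-- A finitely generated ideal `J` of `R` is a GV-ideal (Glaz–Vasconcelos ideal)
if the canonical map `R → Hom_R(J, R)` is an isomorphism. -/
def IsGVIdeal (J : Ideal R) : Prop :=
  J.FG ∧ Function.Bijective (gvCanonicalMap R J)

/-- An ideal `I` of `R` is a w-ideal if whenever `J x ⊆ I` for some GV-ideal `J`,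
then `x ∈ I`. -/
def IsWIdeal (I : Ideal R) : Prop :=
  ∀ x : R, (∃ J : Ideal R, IsGVIdeal R J ∧ ∀ j ∈ J, j * x ∈ I) → x ∈ I

/-- `m` is a maximal w-ideal: maximal among the proper w-ideals of `R`. -/
def IsMaxWIdeal (m : Ideal R) : Prop :=
  IsWIdeal R m ∧ m ≠ ⊤ ∧ ∀ I : Ideal R, IsWIdeal R I → I ≠ ⊤ → m ≤ I → I = m

variable {M : Type v} [AddCommGroup M] [Module R M]

/-- `x` is a GV-torsion element if it is killed by some GV-ideal. -/
def IsGVTorsionElem (x : M) : Prop :=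
  ∃ J : Ideal R, IsGVIdeal R J ∧ ∀ j ∈ J, j • x = 0

variable (M)

/-- `M` is GV-torsion-free if it has no nonzero GV-torsion element. -/
def IsGVTorsionFree : Prop := ∀ x : M, IsGVTorsionElem R x → x = 0

/-- `M` is GV-torsion if all its elements are GV-torsion. -/
def IsGVTorsion : Prop := ∀ x : M, IsGVTorsionElem R x

/-- `M` is a w-module: GV-torsion-free and every map from a GV-ideal to `M`
extends to `R`. -/
def IsWModule : Prop :=
  IsGVTorsionFree R M ∧
    ∀ J : Ideal R, IsGVIdeal R J → ∀ f : J →ₗ[R] M,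
      ∃ g : R →ₗ[R] M, ∀ x : J, g (x : R) = f x

end WDefs

/-!
Everything is decided locally at the maximal w-ideals `m`. A GV-ideal lies in no proper w-ideal,
so a GV-torsion module is killed, elementwise, by elements outside `m`: its localization at `m`
vanishes. Conversely an element killed by `m` and by some `t ∉ m` is GV-torsion, since its
annihilator lies strictly above `m` and therefore has w-closure `R`. Applied to `M/mM`, whose
localization is `M_m/mM_m`, this gives (4) ⇔ (5); and (5) ⇔ (6) because a flat module over the local
ring `R_m` is faithfully flat iff `mM_m ≠ M_m`. For (1) ⇒ (4), test against the w-module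
`Frac(R/m)`, which is killed by `m`. For (6) ⇒ (2), a nonzero `b ∈ B` has its annihilator inside
some maximal w-ideal `m`, so `B_m ≠ 0`; then `(B ⊗ M)_m ≅ B_m ⊗ M_m ≠ 0` by faithful flatness,
whereas it vanishes if `B ⊗ M` is GV-torsion.
-/

open TensorProduct

section

variable {R : Type u} [CommRing R]

@[simp]
lemma gvCanonicalMap_apply (J : Ideal R) (r : R) (j : J) : gvCanonicalMap R J r j = r * j := rfl

namespace IsGVIdeal

variable {J J₁ J₂ : Ideal R}

lemma eq_zero_of_forall_mul_eq_zero (hJ : IsGVIdeal R J) {r : R} (h : ∀ j ∈ J, r * j = 0) :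
    r = 0 :=
  hJ.2.1 <| LinearMap.ext fun j => by simpa using h j j.2

lemma exists_eq_mul (hJ : IsGVIdeal R J) (f : J →ₗ[R] R) : ∃ r : R, ∀ j : J, f j = r * j := by
  obtain ⟨r, rfl⟩ := hJ.2.2 f
  exact ⟨r, fun _ => rfl⟩

lemma mul (h₁ : IsGVIdeal R J₁) (h₂ : IsGVIdeal R J₂) : IsGVIdeal R (J₁ * J₂) := by
  refine ⟨h₁.1.mul h₂.1, fun r s h => ?_, fun f => ?_⟩
  · rw [← sub_eq_zero]
    refine h₁.eq_zero_of_forall_mul_eq_zero fun a ha =>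
      h₂.eq_zero_of_forall_mul_eq_zero fun b hb => ?_
    have := LinearMap.congr_fun h ⟨a * b, Ideal.mul_mem_mul ha hb⟩
    simp only [gvCanonicalMap_apply] at this
    rw [mul_assoc, sub_mul, this, sub_self]
  · -- `f (a * b)` is bilinear in `(a, b)`, so it is `c a * b` for a linear `c : J₁ → R`,
    -- and in turn `c = (d * ·)`
    let e₂ := LinearEquiv.ofBijective (gvCanonicalMap R J₂) h₂.2
    let g := TensorProduct.curry (f ∘ₗ Submodule.mulMap' J₁ J₂)
    obtain ⟨d, hd⟩ := h₁.exists_eq_mul (e₂.symm.toLinearMap ∘ₗ g)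
    refine ⟨d, LinearMap.ext fun x => ?_⟩
    obtain ⟨z, rfl⟩ := Submodule.mulMap'_surjective J₁ J₂ x
    induction z using TensorProduct.induction_on with
    | zero => simp
    | tmul a b =>
      have hab := LinearMap.congr_fun (e₂.apply_symm_apply (g a)) b
      have hca : e₂.symm (g a) = d * a := hd a
      rw [hca] at hab
      simpa [e₂, g, Submodule.val_mulMap'_tmul, mul_assoc] using hab
    | add x y hx hy => simp only [map_add, hx, hy]

end IsGVIdeal

lemma isGVIdeal_top : IsGVIdeal R ⊤ := by
  refine ⟨⟨{1}, by simp⟩, fun r s h => ?_, fun f => ⟨f ⟨1, trivial⟩, ?_⟩⟩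
  · simpa using LinearMap.congr_fun h ⟨1, trivial⟩
  · ext ⟨x, hx⟩
    have hx1 : (⟨x, hx⟩ : (⊤ : Ideal R)) = x • ⟨1, trivial⟩ := Subtype.ext (mul_one x).symm
    simp [hx1, mul_comm]

section WClosure

variable {M : Type v} [AddCommGroup M] [Module R M]

def wClosure (N : Submodule R M) : Submodule R M where
  carrier := {x | ∃ J : Ideal R, IsGVIdeal R J ∧ ∀ j ∈ J, j • x ∈ N}
  add_mem' := by
    rintro x y ⟨J₁, h₁, hx⟩ ⟨J₂, h₂, hy⟩
    refine ⟨J₁ * J₂, h₁.mul h₂, fun j hj => ?_⟩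
    rw [smul_add]
    exact add_mem (hx j (Ideal.mul_le_left hj)) (hy j (Ideal.mul_le_right hj))
  zero_mem' := ⟨⊤, isGVIdeal_top, fun j _ => by simp⟩
  smul_mem' r x := by
    rintro ⟨J, hJ, hx⟩
    exact ⟨J, hJ, fun j hj => smul_comm r j x ▸ N.smul_mem r (hx j hj)⟩

variable {N : Submodule R M} {x : M}

lemma mem_wClosure : x ∈ wClosure N ↔ ∃ J : Ideal R, IsGVIdeal R J ∧ ∀ j ∈ J, j • x ∈ N :=
  Iff.rfl

lemma le_wClosure : N ≤ wClosure N :=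
  fun _ hy => ⟨⊤, isGVIdeal_top, fun j _ => N.smul_mem j hy⟩

lemma isGVTorsionElem_iff_mem_wClosure_bot :
    IsGVTorsionElem R x ↔ x ∈ wClosure (⊥ : Submodule R M) := by
  simp only [mem_wClosure, Submodule.mem_bot, IsGVTorsionElem]

end WClosure

lemma exists_isGVIdeal_mul_le {I L : Ideal R} (hL : L.FG) (hLI : L ≤ wClosure I) :
    ∃ K : Ideal R, IsGVIdeal R K ∧ K * L ≤ I := by
  induction L, hL using Submodule.fg_induction with
  | singleton a =>
    obtain ⟨K, hK, hKa⟩ := hLI (Submodule.mem_span_singleton_self a)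
    refine ⟨K, hK, Ideal.mul_le.2 fun k hk b hb => ?_⟩
    obtain ⟨r, rfl⟩ := Submodule.mem_span_singleton.1 hb
    simpa [mul_left_comm] using I.mul_mem_left r (hKa k hk)
  | sup L₁ L₂ _ _ ih₁ ih₂ =>
    obtain ⟨K₁, hK₁, h₁⟩ := ih₁ (le_sup_left.trans hLI)
    obtain ⟨K₂, hK₂, h₂⟩ := ih₂ (le_sup_right.trans hLI)
    refine ⟨K₁ * K₂, hK₁.mul hK₂, ?_⟩
    rw [Ideal.mul_sup]
    exact sup_le ((Ideal.mul_mono_left Ideal.mul_le_left).trans h₁)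
      ((Ideal.mul_mono_left Ideal.mul_le_right).trans h₂)

lemma isWIdeal_wClosure (I : Ideal R) : IsWIdeal R (wClosure I) := by
  rintro x ⟨J, hJ, hJx⟩
  have hle : J * Ideal.span {x} ≤ wClosure I :=
    Ideal.mul_le.2 fun j hj y hy => by
      obtain ⟨r, rfl⟩ := Submodule.mem_span_singleton.1 hy
      simpa [mul_left_comm] using (wClosure I).smul_mem r (hJx j hj)
  obtain ⟨K, hK, hKI⟩ := exists_isGVIdeal_mul_le (hJ.1.mul (Submodule.fg_span_singleton x)) hle
  refine ⟨K * J, hK.mul hJ, fun k hk => ?_⟩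
  rw [← mul_assoc] at hKI
  exact hKI (Ideal.mul_mem_mul hk (Ideal.mem_span_singleton_self x))

namespace IsWIdeal

variable {I : Ideal R}

lemma eq_top_of_isGVIdeal_le (hI : IsWIdeal R I) {J : Ideal R} (hJ : IsGVIdeal R J)
    (hJI : J ≤ I) : I = ⊤ :=
  (Ideal.eq_top_iff_one I).2 <| hI 1 ⟨J, hJ, fun j hj => by simpa using hJI hj⟩

lemma exists_mem_notMem_of_isGVIdeal (hI : IsWIdeal R I) (hne : I ≠ ⊤) {J : Ideal R}
    (hJ : IsGVIdeal R J) : ∃ t ∈ J, t ∉ I :=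
  SetLike.not_le_iff_exists.1 fun hJI => hne (hI.eq_top_of_isGVIdeal_le hJ hJI)

lemma colon (hI : IsWIdeal R I) (a : R) : IsWIdeal R (I.colon {a}) := by
  rintro x ⟨J, hJ, hJx⟩
  refine Submodule.mem_colon_singleton.2 (hI _ ⟨J, hJ, fun j hj => ?_⟩)
  simpa [mul_assoc] using Submodule.mem_colon_singleton.1 (hJx j hj)

lemma sSup_of_directedOn {c : Set (Ideal R)} (hc : ∀ I ∈ c, IsWIdeal R I) (hne : c.Nonempty)
    (hdir : DirectedOn (· ≤ ·) c) : IsWIdeal R (sSup c) := by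
  rintro x ⟨J, hJ, hJx⟩
  have hle : J * Ideal.span {x} ≤ sSup c :=
    Ideal.mul_le.2 fun j hj y hy => by
      obtain ⟨r, rfl⟩ := Submodule.mem_span_singleton.1 hy
      simpa [mul_left_comm] using (sSup c).mul_mem_left r (hJx j hj)
  obtain ⟨K, hKc, hKle⟩ := (CompleteLattice.isCompactElement_iff_le_of_directed_sSup_le _ _).1
    ((Submodule.fg_iff_compact _).1 (hJ.1.mul (Submodule.fg_span_singleton x))) c hne hdir hle
  refine le_sSup hKc (hc K hKc x ⟨J, hJ, fun j hj => ?_⟩)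
  exact hKle (Ideal.mul_mem_mul hj (Ideal.mem_span_singleton_self x))

end IsWIdeal

lemma exists_isMaxWIdeal_le {I : Ideal R} (hI : IsWIdeal R I) (hne : I ≠ ⊤) :
    ∃ m : Ideal R, IsMaxWIdeal R m ∧ I ≤ m := by
  let S := {K : Ideal R | IsWIdeal R K ∧ K ≠ ⊤}
  have hchain : ∀ c ⊆ S, IsChain (· ≤ ·) c → ∀ K ∈ c, ∃ ub ∈ S, ∀ L ∈ c, L ≤ ub := by
    intro c hc hchain K hK
    refine ⟨sSup c, ⟨IsWIdeal.sSup_of_directedOn (fun L hL => (hc hL).1) ⟨K, hK⟩ hchain.directedOn,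
      fun htop => ?_⟩, fun _ => le_sSup⟩
    obtain ⟨L, hL, hL1⟩ := (Submodule.mem_sSup_of_directed ⟨K, hK⟩ hchain.directedOn).1
      (htop ▸ Submodule.mem_top : (1 : R) ∈ sSup c)
    exact (hc hL).2 ((Ideal.eq_top_iff_one L).2 hL1)
  obtain ⟨m, hIm, ⟨hm, hmne⟩, hmax⟩ := zorn_le_nonempty₀ S hchain I ⟨hI, hne⟩
  exact ⟨m, ⟨hm, hmne, fun K hK hKne hmK => (hmax ⟨hK, hKne⟩ hmK).antisymm hmK⟩, hIm⟩

namespace IsMaxWIdeal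

variable {m : Ideal R} (hm : IsMaxWIdeal R m)
include hm

lemma isPrime : m.IsPrime := by
  -- for `a ∉ m`, the colon ideal `(m : a)` is a proper w-ideal containing `m`, hence equal to `m`
  refine ⟨hm.2.1, fun {a b} hab => or_iff_not_imp_left.2 fun ha => ?_⟩
  have hcolon : m.colon {a} = m := hm.2.2 _ (hm.1.colon a)
    (fun h => ha (by simpa using Submodule.mem_colon_singleton.1 ((Ideal.eq_top_iff_one _).1 h)))
    (fun x hx => Submodule.mem_colon_singleton.2 (m.mul_mem_right a hx))
  exact hcolon ▸ Submodule.mem_colon_singleton.2 (by rwa [smul_eq_mul, mul_comm])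

/-- The w-closure of `I` is a w-ideal strictly above `m`, hence all of `R`. -/
lemma exists_isGVIdeal_le {I : Ideal R} (hmI : m ≤ I) (hIm : ¬ I ≤ m) :
    ∃ J : Ideal R, IsGVIdeal R J ∧ J ≤ I := by
  have hw : wClosure I = ⊤ := by
    by_contra hne
    exact hIm (le_wClosure.trans (hm.2.2 _ (isWIdeal_wClosure I) hne (hmI.trans le_wClosure)).le)
  obtain ⟨J, hJ, hJI⟩ := (mem_wClosure (N := I)).1 (hw ▸ Submodule.mem_top : (1 : R) ∈ wClosure I)
  exact ⟨J, hJ, fun j hj => by simpa using hJI j hj⟩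

end IsMaxWIdeal

section Localization

variable {N : Type*} [AddCommGroup N] [Module R N]

lemma IsGVTorsion.of_surjective {N' : Type*} [AddCommGroup N'] [Module R N'] (hN : IsGVTorsion R N)
    (f : N →ₗ[R] N') (hf : Function.Surjective f) : IsGVTorsion R N' := by
  intro y
  obtain ⟨x, rfl⟩ := hf y
  obtain ⟨J, hJ, hJx⟩ := hN x
  exact ⟨J, hJ, fun j hj => by rw [← map_smul, hJx j hj, map_zero]⟩

lemma IsGVTorsion.exists_notMem_smul_eq_zero (hN : IsGVTorsion R N) {p : Ideal R}
    (hp : IsWIdeal R p) (hne : p ≠ ⊤) (x : N) : ∃ t ∉ p, t • x = 0 := by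
  obtain ⟨J, hJ, hJx⟩ := hN x
  obtain ⟨t, htJ, htp⟩ := hp.exists_mem_notMem_of_isGVIdeal hne hJ
  exact ⟨t, htp, hJx t htJ⟩

lemma IsMaxWIdeal.isGVTorsionElem_of_smul_eq_zero {m : Ideal R} (hm : IsMaxWIdeal R m) {x : N}
    (hmx : ∀ a ∈ m, a • x = 0) {t : R} (ht : t ∉ m) (htx : t • x = 0) : IsGVTorsionElem R x := by
  obtain ⟨J, hJ, hJx⟩ := hm.exists_isGVIdeal_le (I := (⊥ : Submodule R N).colon {x})
    (fun a ha => Submodule.mem_colon_singleton.2 (hmx a ha))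
    (fun h => ht (h (Submodule.mem_colon_singleton.2 htx)))
  exact ⟨J, hJ, fun j hj => Submodule.mem_colon_singleton.1 (hJx hj)⟩

lemma IsMaxWIdeal.isGVTorsion_iff_subsingleton_localizedModule {m : Ideal R}
    (hm : IsMaxWIdeal R m) [m.IsPrime] (hmN : Module.IsTorsionBySet R N m) :
    IsGVTorsion R N ↔ Subsingleton (LocalizedModule m.primeCompl N) := by
  rw [LocalizedModule.subsingleton_iff]
  refine ⟨fun h x => h.exists_notMem_smul_eq_zero hm.1 hm.2.1 x, fun h x => ?_⟩
  obtain ⟨t, ht, htx⟩ := h x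
  exact hm.isGVTorsionElem_of_smul_eq_zero (fun a ha => hmN (a := ⟨a, ha⟩)) ht htx

variable {M : Type v} [AddCommGroup M] [Module R M]

lemma smul_top_localizedModule_eq_top_iff (S : Submonoid R) (I : Ideal R) :
    (I • ⊤ : Submodule R (LocalizedModule S M)) = ⊤ ↔
      Subsingleton (LocalizedModule S (M ⧸ I • (⊤ : Submodule R M))) := by
  rw [← (localizedQuotientEquiv S (I • (⊤ : Submodule R M))).subsingleton_congr,
    Submodule.Quotient.subsingleton_iff,
    ← Submodule.restrictScalars_eq_top_iff R (p := Submodule.localized S _),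
    Submodule.localized, Submodule.restrictScalars_localized', Submodule.localized₀_smul,
    Submodule.localized₀_top]

lemma IsMaxWIdeal.isGVTorsion_quotient_iff_smul_top_eq_top {m : Ideal R} (hm : IsMaxWIdeal R m)
    [m.IsPrime] : IsGVTorsion R (M ⧸ m • (⊤ : Submodule R M)) ↔
      (m • ⊤ : Submodule R (LocalizedModule m.primeCompl M)) = ⊤ := by
  rw [smul_top_localizedModule_eq_top_iff, hm.isGVTorsion_iff_subsingleton_localizedModule
    (Module.isTorsionBySet_quotient_ideal_smul M m)]

lemma smul_top_eq_top_iff_maximalIdeal_smul_top (m : Ideal R) [m.IsPrime]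
    [Module (Localization.AtPrime m) M] [IsScalarTower R (Localization.AtPrime m) M] :
    (m • ⊤ : Submodule R M) = ⊤ ↔
      (IsLocalRing.maximalIdeal (Localization.AtPrime m) • ⊤ :
        Submodule (Localization.AtPrime m) M) = ⊤ := by
  rw [← Localization.AtPrime.map_eq_maximalIdeal, ← Ideal.localized'_eq_map _ m.primeCompl]
  conv_rhs => rw [← Submodule.restrictScalars_eq_top_iff R,
    Submodule.restrictScalars_localized'_smul, Submodule.restrictScalars_top]

lemma faithfullyFlat_iff_flat_and_smul_top_ne_top (m : Ideal R) [m.IsPrime]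
    [Module (Localization.AtPrime m) M] [IsScalarTower R (Localization.AtPrime m) M] :
    Module.FaithfullyFlat (Localization.AtPrime m) M ↔
      Module.Flat (Localization.AtPrime m) M ∧ (m • ⊤ : Submodule R M) ≠ ⊤ := by
  rw [Module.faithfullyFlat_iff, Ne, smul_top_eq_top_iff_maximalIdeal_smul_top]
  refine and_congr_right fun _ => ⟨fun h => h (IsLocalRing.maximalIdeal.isMaximal _),
    fun h n hn => IsLocalRing.eq_maximalIdeal hn ▸ h⟩

end Localization

section TensorProduct

variable {M : Type v} [AddCommGroup M] [Module R M] {A : Type*} [AddCommGroup A] [Module R A]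

lemma isGVTorsion_tensorProduct_of_isGVTorsion_quotient {I : Ideal R}
    (hA : Module.IsTorsionBySet R A I) (hM : IsGVTorsion R (M ⧸ I • (⊤ : Submodule R M))) :
    IsGVTorsion R (A ⊗[R] M) := by
  have htmul (x : A) {y : M} (hy : y ∈ I • (⊤ : Submodule R M)) : x ⊗ₜ[R] y = 0 := by
    refine Submodule.smul_induction_on hy (fun a ha n _ => ?_) (fun y z hy hz => ?_)
    · rw [← smul_tmul, hA (a := ⟨a, ha⟩), zero_tmul]
    · rw [tmul_add, hy, hz, add_zero]
  intro z
  rw [isGVTorsionElem_iff_mem_wClosure_bot]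
  induction z using TensorProduct.induction_on with
  | zero => exact zero_mem _
  | tmul x y =>
    obtain ⟨J, hJ, hJy⟩ := hM (Submodule.Quotient.mk y)
    refine ⟨J, hJ, fun j hj => ?_⟩
    rw [← tmul_smul, htmul x ((Submodule.Quotient.mk_eq_zero _).1 (hJy j hj))]
    exact zero_mem _
  | add z₁ z₂ h₁ h₂ => exact add_mem h₁ h₂

lemma subsingleton_tensorProduct_localizedModule (S : Submonoid R)
    (h : ∀ z : A ⊗[R] M, ∃ t ∈ S, t • z = 0) :
    Subsingleton (LocalizedModule S A ⊗[Localization S] LocalizedModule S M) := by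
  have : Subsingleton (LocalizedModule S A ⊗[R] LocalizedModule S M) :=
    (IsLocalizedModule.subsingleton_iff S
      (TensorProduct.map (LocalizedModule.mkLinearMap S A) (LocalizedModule.mkLinearMap S M))).2 h
  exact (IsLocalization.moduleTensorEquiv S (Localization S) _ _).toEquiv.subsingleton

end TensorProduct

section WModule

variable {K V : Type*} [Field K] [Algebra R K] [AddCommGroup V] [Module K V] [Module R V]
  [IsScalarTower R K V]

/-- Only one element of a GV-ideal matters here: it acts invertibly on `V`. -/
lemma isWModule_of_exists_algebraMap_ne_zero
    (h : ∀ J : Ideal R, IsGVIdeal R J → ∃ t ∈ J, algebraMap R K t ≠ 0) : IsWModule R V := by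
  refine ⟨fun x ⟨J, hJ, hJx⟩ => ?_, fun J hJ f => ?_⟩
  · obtain ⟨t, htJ, ht⟩ := h J hJ
    have := hJx t htJ
    rw [← algebraMap_smul K t x, smul_eq_zero] at this
    exact this.resolve_left ht
  · obtain ⟨t, htJ, ht⟩ := h J hJ
    refine ⟨LinearMap.toSpanSingleton R V ((algebraMap R K t)⁻¹ • f ⟨t, htJ⟩), fun j => ?_⟩
    have hswap : algebraMap R K t • f j = (j : R) • f ⟨t, htJ⟩ := by
      rw [algebraMap_smul, ← map_smul, ← map_smul]
      congr 1
      exact Subtype.ext (mul_comm _ _)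
    rw [LinearMap.toSpanSingleton_apply, smul_comm, ← hswap, inv_smul_smul₀ ht]

end WModule

section FractionRing

variable (m : Ideal R)

lemma algebraMap_fractionRing_quotient_eq_zero_iff {a : R} :
    algebraMap R (FractionRing (R ⧸ m)) a = 0 ↔ a ∈ m := by
  rw [IsScalarTower.algebraMap_apply R (R ⧸ m), IsFractionRing.to_map_eq_zero_iff,
    Ideal.Quotient.algebraMap_eq, Ideal.Quotient.eq_zero_iff_mem]

lemma isTorsionBySet_fractionRing_quotient : Module.IsTorsionBySet R (FractionRing (R ⧸ m)) m :=
  fun x a => by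
    rw [Algebra.smul_def, (algebraMap_fractionRing_quotient_eq_zero_iff m).2 a.2, zero_mul]

variable {m}

lemma IsMaxWIdeal.isWModule_fractionRing (hm : IsMaxWIdeal R m) [m.IsPrime] :
    IsWModule R (FractionRing (R ⧸ m)) :=
  isWModule_of_exists_algebraMap_ne_zero (K := FractionRing (R ⧸ m)) fun J hJ => by
    obtain ⟨t, htJ, htm⟩ := hm.1.exists_mem_notMem_of_isGVIdeal hm.2.1 hJ
    exact ⟨t, htJ, (algebraMap_fractionRing_quotient_eq_zero_iff m).not.2 htm⟩

end FractionRing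

section TorsionFree

variable {B : Type*} [AddCommGroup B] [Module R B]

lemma IsGVTorsionFree.exists_isMaxWIdeal_forall_smul_ne_zero (hB : IsGVTorsionFree R B)
    [Nontrivial B] : ∃ m : Ideal R, IsMaxWIdeal R m ∧ ∃ b : B, ∀ t ∉ m, t • b ≠ 0 := by
  obtain ⟨b, hb⟩ := exists_ne (0 : B)
  set ann : Ideal R := (⊥ : Submodule R B).colon {b}
  have hne : wClosure ann ≠ ⊤ := fun htop => by
    obtain ⟨J, hJ, hJ1⟩ := (mem_wClosure (N := ann)).1 (htop ▸ Submodule.mem_top : (1 : R) ∈ _)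
    refine hb (hB b ⟨J, hJ, fun j hj => ?_⟩)
    simpa [ann, Submodule.mem_colon_singleton] using hJ1 j hj
  obtain ⟨m, hm, hannm⟩ := exists_isMaxWIdeal_le (isWIdeal_wClosure ann) hne
  exact ⟨m, hm, b, fun t htm htb => htm (hannm (le_wClosure (Submodule.mem_colon_singleton.2 htb)))⟩

variable {M : Type v} [AddCommGroup M] [Module R M]

lemma IsGVTorsionFree.not_isGVTorsion_tensorProduct (hB : IsGVTorsionFree R B) [Nontrivial B]
    (hM : ∀ m : Ideal R, IsMaxWIdeal R m → ∀ [m.IsPrime],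
      Module.FaithfullyFlat (Localization.AtPrime m) (LocalizedModule m.primeCompl M)) :
    ¬ IsGVTorsion R (B ⊗[R] M) := by
  intro htors
  obtain ⟨m, hm, b, hb⟩ := hB.exists_isMaxWIdeal_forall_smul_ne_zero
  have := hm.isPrime
  have := hM m hm
  have := subsingleton_tensorProduct_localizedModule m.primeCompl
    (htors.exists_notMem_smul_eq_zero hm.1 hm.2.1)
  have hBm : Subsingleton (LocalizedModule m.primeCompl B) :=
    Module.FaithfullyFlat.rTensor_reflects_triviality (Localization.AtPrime m)
      (LocalizedModule m.primeCompl M) _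
  obtain ⟨t, htm, htb⟩ := LocalizedModule.subsingleton_iff.1 hBm b
  exact hb t htm htb

end TorsionFree

end

/-- w-analogue of Ishikawa's Theorem 2.1: for a w-flat module `M`
(i.e. `M_m` is flat over `R_m` for every maximal w-ideal `m`), TFAE:
(1) `A ⊗_R M` is not GV-torsion for every nonzero w-module `A`;
(2) `B ⊗_R M` is not GV-torsion for every nonzero GV-torsion-free module `B`;
(3) `M/IM` is not GV-torsion for every proper w-ideal `I`;
(4) `M/mM` is not GV-torsion for every maximal w-ideal `m`;
(5) `M_m/mM_m ≠ 0` for every maximal w-ideal `m`;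
(6) `M_m` is faithfully flat over `R_m` for every maximal w-ideal `m`. -/
theorem wFaithfullyFlat_tfae (R : Type u) [CommRing R] (M : Type u) [AddCommGroup M]
    [Module R M]
    (hflat : ∀ (m : Ideal R), IsMaxWIdeal R m → ∀ [hp : m.IsPrime],
      Module.Flat (Localization.AtPrime m) (LocalizedModule m.primeCompl M)) :
    List.TFAE [
      ∀ (A : Type u) [AddCommGroup A] [Module R A], IsWModule R A → Nontrivial A →
        ¬ IsGVTorsion R (TensorProduct R A M),
      ∀ (B : Type u) [AddCommGroup B] [Module R B], IsGVTorsionFree R B → Nontrivial B →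
        ¬ IsGVTorsion R (TensorProduct R B M),
      ∀ I : Ideal R, IsWIdeal R I → I ≠ ⊤ →
        ¬ IsGVTorsion R (M ⧸ (I • (⊤ : Submodule R M))),
      ∀ m : Ideal R, IsMaxWIdeal R m →
        ¬ IsGVTorsion R (M ⧸ (m • (⊤ : Submodule R M))),
      ∀ (m : Ideal R), IsMaxWIdeal R m → ∀ [hp : m.IsPrime],
        m • (⊤ : Submodule R (LocalizedModule m.primeCompl M)) ≠ ⊤,
      ∀ (m : Ideal R), IsMaxWIdeal R m → ∀ [hp : m.IsPrime],
        Module.FaithfullyFlat (Localization.AtPrime m) (LocalizedModule m.primeCompl M) ] := by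
  tfae_have 2 → 1 := fun h2 A _ _ hA => h2 A hA.1
  tfae_have 1 → 4 := fun h1 m hm htors => by
    have := hm.isPrime
    exact h1 _ hm.isWModule_fractionRing inferInstance
      (isGVTorsion_tensorProduct_of_isGVTorsion_quotient (isTorsionBySet_fractionRing_quotient m)
        htors)
  tfae_have 3 → 4 := fun h3 m hm => h3 m hm.1 hm.2.1
  tfae_have 4 → 3 := fun h4 I hI hne htors => by
    obtain ⟨m, hm, hIm⟩ := exists_isMaxWIdeal_le hI hne
    exact h4 m hm
      (htors.of_surjective _ (Submodule.factor_surjective (Submodule.smul_mono_left hIm)))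
  tfae_have 4 → 5 := fun h4 m hm _ htop =>
    h4 m hm (hm.isGVTorsion_quotient_iff_smul_top_eq_top.2 htop)
  tfae_have 5 → 4 := fun h5 m hm htors => by
    have := hm.isPrime
    exact h5 m hm (hm.isGVTorsion_quotient_iff_smul_top_eq_top.1 htors)
  tfae_have 5 → 6 := fun h5 m hm _ =>
    (faithfullyFlat_iff_flat_and_smul_top_ne_top m).2 ⟨hflat m hm, h5 m hm⟩
  tfae_have 6 → 5 := fun h6 m hm _ =>
    ((faithfullyFlat_iff_flat_and_smul_top_ne_top m).1 (h6 m hm)).2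
  tfae_have 6 → 2 := fun h6 B _ _ hB _ => hB.not_isGVTorsion_tensorProduct h6
  tfae_finish
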